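/- arXiv:1402.2367 — 3 statements merged into one kernel-verified Lean document; each statement's English description precedes it below -/
import Mathlib

section
/- For every positive integer n, the total sum of Lah numbers 𝓛_n = ∑_{k=1}^{n} L(n,k) has the integral representation 𝓛_n = ∫_0^∞ (∑_{j=0}^∞ t^j/(j!(j+1)!)) t^n e^{-(1+t)} dt. -/
open MeasureTheory Real Finset

/-- Lah numbers: `L(n,k) = C(n-1,k-1) * n! / k!` (as a real number). -/
noncomputable def lah (n k : ℕ) : ℝ :=
  ((n - 1).choose (k - 1) : ℝ) * (Nat.factorial n) / (Nat.factorial k)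

/-- The total sum of Lah numbers `𝓛_n = ∑_{k=1}^n L(n,k)`. -/
noncomputable def lahTotal (n : ℕ) : ℝ := ∑ k ∈ Finset.Icc 1 n, lah n k

/-!
Expanding the series and integrating term by term against `t ^ n * exp (-t)` (Euler's integral
for `Γ`) turns the right-hand side into `exp (-1) * ∑ j, (n + j)! / (j! * (j + 1)!)`.
Since `(n + j)! / (j! * (j + 1)!) = C(n + j, j) * n! / (j + 1)!` and, by Vandermonde,
`C(n + j, j) = ∑_{a + b = j} C(n - 1, a) * C(j + 1, b)`, this coefficient is the `j`-th term of
the Cauchy product of `(L(n, a + 1))_a` with the exponential series `(1 / b!)_b`; hence the series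
sums to `exp 1 * 𝓛_n`.
-/

open scoped Nat

theorem integral_pow_mul_exp_neg_Ioi (m : ℕ) :
    ∫ t in Set.Ioi (0 : ℝ), t ^ m * exp (-t) = m ! := by
  rw [← Gamma_nat_eq_factorial, Gamma_eq_integral (by positivity)]
  refine setIntegral_congr_fun measurableSet_Ioi fun t _ => ?_
  rw [add_sub_cancel_right, rpow_natCast, mul_comm]

theorem integrableOn_pow_mul_exp_neg_Ioi (m : ℕ) :
    IntegrableOn (fun t : ℝ => t ^ m * exp (-t)) (Set.Ioi 0) := by
  refine (GammaIntegral_convergent (s := m + 1) (by positivity)).congr_fun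
    (fun t _ => ?_) measurableSet_Ioi
  simp only [add_sub_cancel_right, rpow_natCast, mul_comm]

theorem hasSum_integral_tsum_mul_pow_mul_exp_neg {a : ℕ → ℝ} {n : ℕ}
    (ha : Summable fun j => |a j| * (n + j)!) :
    HasSum (fun j => a j * (n + j)!)
      (∫ t in Set.Ioi 0, (∑' j, a j * t ^ j) * t ^ n * exp (-t)) := by
  set F : ℕ → ℝ → ℝ := fun j t => a j * (t ^ (n + j) * exp (-t))
  have hF_int (j : ℕ) : ∫ t in Set.Ioi 0, F j t = a j * (n + j)! := by
    rw [integral_const_mul, integral_pow_mul_exp_neg_Ioi]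
  have hF_norm (j : ℕ) : ∫ t in Set.Ioi 0, ‖F j t‖ = |a j| * (n + j)! := by
    rw [← integral_pow_mul_exp_neg_Ioi, ← integral_const_mul]
    refine setIntegral_congr_fun measurableSet_Ioi fun t (ht : 0 < t) => ?_
    rw [norm_mul, Real.norm_eq_abs, Real.norm_of_nonneg (by positivity)]
  have hsum := hasSum_integral_of_summable_integral_norm
    (fun j => (integrableOn_pow_mul_exp_neg_Ioi (n + j)).const_mul (a j)) (F := F)
    (by simpa only [hF_norm] using ha)
  have hF_sum (t : ℝ) : (∑' j, a j * t ^ j) * t ^ n * exp (-t) = ∑' j, F j t := by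
    rw [← tsum_mul_right, ← tsum_mul_right]
    exact tsum_congr fun j => by ring
  simpa only [hF_int, hF_sum] using hsum

theorem lah_eq_zero_of_lt {n k : ℕ} (hn : n ≠ 0) (h : n < k) : lah n k = 0 := by
  rw [lah, Nat.choose_eq_zero_of_lt (by omega), Nat.cast_zero, zero_mul, zero_div]

theorem hasSum_lah_succ {n : ℕ} (hn : n ≠ 0) :
    HasSum (fun a => lah n (a + 1)) (lahTotal n) := by
  have hshift : ∑ a ∈ range n, lah n (a + 1) = lahTotal n := by
    rw [range_eq_Ico, sum_Ico_add' (lah n) 0 n 1, zero_add, Ico_add_one_right_eq_Icc, lahTotal]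
  rw [← hshift]
  exact hasSum_sum_of_ne_finset_zero fun a ha => lah_eq_zero_of_lt hn (by simpa using ha)

theorem lah_succ_mul_inv_factorial (n a b : ℕ) :
    lah n (a + 1) * (b ! : ℝ)⁻¹
      = (n - 1).choose a * (a + 1 + b).choose b * n ! / (a + 1 + b)! := by
  have h : ((a + 1 + b).choose b : ℝ) * (a + 1)! * b ! = (a + 1 + b)! := by
    exact_mod_cast Nat.add_choose_mul_factorial_mul_factorial (a + 1) b
  rw [lah, Nat.add_sub_cancel, eq_div_iff (by positivity), ← h]
  field_simp

theorem sum_antidiagonal_lah_succ_mul_inv_factorial {n : ℕ} (hn : n ≠ 0) (j : ℕ) :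
    ∑ ab ∈ antidiagonal j, lah n (ab.1 + 1) * (ab.2 ! : ℝ)⁻¹
      = (n + j)! / (j ! * (j + 1)!) := by
  have hvandermonde : ((n + j).choose j : ℝ)
      = ∑ ab ∈ antidiagonal j, ((n - 1).choose ab.1 * (j + 1).choose ab.2 : ℝ) := by
    rw [show n + j = n - 1 + (j + 1) by omega, Nat.add_choose_eq]
    push_cast
    rfl
  have hfac : ((n + j).choose j : ℝ) * n ! * j ! = (n + j)! := by
    exact_mod_cast Nat.add_choose_mul_factorial_mul_factorial n j
  rw [← hfac, hvandermonde, sum_mul, sum_mul, sum_div]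
  refine sum_congr rfl fun ab hab => ?_
  rw [Finset.HasAntidiagonal.mem_antidiagonal] at hab
  rw [lah_succ_mul_inv_factorial, show ab.1 + 1 + ab.2 = j + 1 by omega]
  field_simp

theorem hasSum_factorial_add_div_lahTotal {n : ℕ} (hn : n ≠ 0) :
    HasSum (fun j => ((n + j)! : ℝ) / (j ! * (j + 1)!)) (exp 1 * lahTotal n) := by
  have hf := hasSum_lah_succ hn
  have hg : HasSum (fun b => (b ! : ℝ)⁻¹) (exp 1) := by
    simpa only [exp_eq_exp_ℝ, one_pow, one_div] using
      NormedSpace.expSeries_div_hasSum_exp (1 : ℝ)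
  have hf_norm : Summable fun a => ‖lah n (a + 1)‖ :=
    summable_of_ne_finset_zero (s := range n) fun a ha => by
      rw [lah_eq_zero_of_lt hn (by simpa using ha), norm_zero]
  have hg_norm : Summable fun b => ‖(b ! : ℝ)⁻¹‖ := by
    simpa only [norm_inv, RCLike.norm_natCast] using hg.summable
  have hprod :=
    (summable_norm_sum_mul_antidiagonal_of_summable_norm hf_norm hg_norm).of_norm.hasSum
  rw [← tsum_mul_tsum_eq_tsum_sum_antidiagonal_of_summable_norm hf_norm hg_norm, hf.tsum_eq,
    hg.tsum_eq, mul_comm] at hprod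
  simpa only [sum_antidiagonal_lah_succ_mul_inv_factorial hn] using hprod

theorem lahTotal_integral_repr (n : ℕ) (hn : 1 ≤ n) :
    lahTotal n
      = ∫ t in Set.Ioi (0 : ℝ),
          (∑' j : ℕ, t ^ j / ((Nat.factorial j : ℝ) * (Nat.factorial (j + 1))))
            * t ^ n * Real.exp (-(1 + t)) := by
  have hcoef := hasSum_factorial_add_div_lahTotal (Nat.one_le_iff_ne_zero.mp hn)
  have hmoments := hasSum_integral_tsum_mul_pow_mul_exp_neg (n := n)
    (a := fun j => ((j ! : ℝ) * (j + 1)!)⁻¹) (by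
      simpa only [abs_inv, abs_mul, Nat.abs_cast, inv_mul_eq_div] using hcoef.summable)
  simp only [inv_mul_eq_div] at hmoments
  have hintegrand (t : ℝ) :
      (∑' j : ℕ, t ^ j / ((j ! : ℝ) * (j + 1)!)) * t ^ n * exp (-(1 + t))
      = exp (-1) * ((∑' j : ℕ, t ^ j / ((j ! : ℝ) * (j + 1)!)) * t ^ n * exp (-t)) := by
    rw [neg_add, exp_add]
    ring
  rw [setIntegral_congr_fun measurableSet_Ioi fun t _ => hintegrand t, integral_const_mul,
    hmoments.unique hcoef, ← mul_assoc, ← exp_add, neg_add_cancel, exp_zero, one_mul]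
end

section
/- The sequence of total sums of Lah numbers 𝓛_n = ∑_{k=1}^{n} L(n,k), for n ≥ 1, is absolutely convex: for all integers n ≥ 1 and k ≥ 0, the even-order finite difference Δ^{2k} 𝓛_n = ∑_{m=0}^{2k} (-1)^m C(2k, m) 𝓛_{n+2k-m} is nonnegative. -/
open Finset

/-!
Write `Δ` for the forward difference. The shifted Lah columns `c_j m = L(m+1, j+1)` satisfy
`Δ c_0 m = (m + 1) c_0 m` and, by the Lah recurrence, `Δ c_{j+1} m = (m + j + 2) c_{j+1} m + c_j m`.
Since `Δᵏ⁺¹ ((m + a) f) = (m + a) Δᵏ⁺¹ f + (k + 1) Δᵏ f (m + 1)`, a nonnegative `f` with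
`Δ f = (m + a) f + g`, `a ≥ 0`, has all forward differences nonnegative as soon as `g` does;
induction on `j` shows this for every column. The alternating sum in the theorem is `Δ^{2k}` of
the sum of the columns at `n - 1`, hence nonnegative; in fact `𝓛` is absolutely monotone.
-/

section FwdDiff

variable {R : Type*} [CommRing R]

theorem sum_range_neg_one_pow_mul_choose_mul_eq_fwdDiff_iter (f : ℕ → R) (n K : ℕ) :
    ∑ m ∈ range (K + 1), (-1 : R) ^ m * (K.choose m : R) * f (n + K - m) = (fwdDiff 1)^[K] f n := by
  rw [fwdDiff_iter_eq_sum_shift, ← sum_range_reflect]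
  refine sum_congr rfl fun i hi => ?_
  have hi : i ≤ K := Nat.lt_succ_iff.mp (mem_range.mp hi)
  rw [Nat.add_sub_cancel, Nat.choose_symm hi, show n + K - (K - i) = n + i by omega, smul_eq_mul,
    mul_one, zsmul_eq_mul]
  push_cast
  ring

theorem fwdDiff_iter_succ_linear_mul (a : R) (k : ℕ) (f : ℕ → R) (n : ℕ) :
    (fwdDiff 1)^[k + 1] (fun m : ℕ => ((m : R) + a) * f m) n
      = ((n : R) + a) * (fwdDiff 1)^[k + 1] f n + (k + 1) * (fwdDiff 1)^[k] f (n + 1) := by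
  induction k generalizing f n with
  | zero =>
    simp only [zero_add, Function.iterate_one, Function.iterate_zero, id_eq, fwdDiff]
    push_cast
    ring
  | succ k ih =>
    have hΔ : fwdDiff 1 (fun m : ℕ => ((m : R) + a) * f m)
        = (fun m : ℕ => ((m : R) + a) * fwdDiff 1 f m) + fun m => f (m + 1) := by
      funext m
      simp only [fwdDiff, Pi.add_apply]
      push_cast
      ring
    rw [Function.iterate_succ_apply, hΔ, fwdDiff_iter_add, Pi.add_apply, ih,
      fwdDiff_iter_comp_add, ← Function.iterate_succ_apply, ← Function.iterate_succ_apply]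
    push_cast
    ring

theorem fwdDiff_iter_nonneg_of_fwdDiff_eq [PartialOrder R] [IsOrderedRing R] {f g : ℕ → R} {a : R} (ha : 0 ≤ a) (hf : ∀ n, 0 ≤ f n)
    (hg : ∀ k n, 0 ≤ (fwdDiff 1)^[k] g n) (hfg : ∀ n, fwdDiff 1 f n = ((n : R) + a) * f n + g n) :
    ∀ k n, 0 ≤ (fwdDiff 1)^[k] f n := by
  intro k
  induction k using Nat.strong_induction_on with
  | _ k ih =>
    intro n
    cases k with
    | zero => exact hf n
    | succ k =>
      have hΔ : fwdDiff 1 f = (fun m : ℕ => ((m : R) + a) * f m) + g := funext hfg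
      rw [Function.iterate_succ_apply, hΔ, fwdDiff_iter_add, Pi.add_apply]
      refine add_nonneg ?_ (hg k n)
      cases k with
      | zero => exact mul_nonneg (by positivity) (hf n)
      | succ k =>
        rw [fwdDiff_iter_succ_linear_mul]
        exact add_nonneg (mul_nonneg (by positivity) (ih (k + 1) (by omega) n))
          (mul_nonneg (by exact_mod_cast (k + 1).cast_nonneg) (ih k (by omega) (n + 1)))

end FwdDiff

-- Indices are shifted because `lah m 0 = m!` and `lah 0 1 = 1` are junk values that break the Lah recurrence.
noncomputable def lahColumn (j m : ℕ) : ℝ := lah (m + 1) (j + 1)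

theorem lahColumn_nonneg (j m : ℕ) : 0 ≤ lahColumn j m := by
  unfold lahColumn lah
  positivity

theorem lahColumn_eq_zero_of_lt {j m : ℕ} (h : m < j) : lahColumn j m = 0 := by
  simp [lahColumn, lah, Nat.choose_eq_zero_of_lt h]

theorem lahColumn_zero (m : ℕ) : lahColumn 0 m = (m + 1).factorial := by
  simp [lahColumn, lah]

theorem lahColumn_succ_succ (j m : ℕ) :
    lahColumn (j + 1) (m + 1) = ((m : ℝ) + j + 3) * lahColumn (j + 1) m + lahColumn j m := by
  have hpascal : ((m + 1).choose (j + 1) : ℝ) = m.choose j + m.choose (j + 1) := by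
    exact_mod_cast Nat.choose_succ_succ m j
  have habsorb : ((m + 1 : ℕ) : ℝ) * m.choose j = (m + 1).choose (j + 1) * (j + 1 : ℕ) := by
    exact_mod_cast Nat.add_one_mul_choose_eq m j
  simp only [lahColumn, lah, Nat.add_sub_cancel, Nat.factorial_succ (m + 1),
    Nat.factorial_succ (j + 1)]
  push_cast at habsorb ⊢
  field_simp
  linear_combination ((m : ℝ) + j + 3) * hpascal + habsorb

theorem fwdDiff_iter_lahColumn_nonneg (j k n : ℕ) : 0 ≤ (fwdDiff 1)^[k] (lahColumn j) n := by
  induction j generalizing k n with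
  | zero =>
    refine fwdDiff_iter_nonneg_of_fwdDiff_eq zero_le_one (lahColumn_nonneg 0) (g := 0)
      (fun k n => ?_) (fun m => ?_) k n
    · have hzero : fwdDiff 1 (0 : ℕ → ℝ) = 0 := fwdDiff_const 1 0
      rw [Function.iterate_fixed hzero]
      rfl
    · simp only [fwdDiff, lahColumn_zero, Nat.factorial_succ (m + 1), Pi.zero_apply]
      push_cast
      ring
  | succ j ih =>
    refine fwdDiff_iter_nonneg_of_fwdDiff_eq (a := (j : ℝ) + 2) (by positivity)
      (lahColumn_nonneg _) ih (fun m => ?_) k n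
    rw [fwdDiff, lahColumn_succ_succ]
    ring

theorem lahTotal_succ_eq_sum_lahColumn {m N : ℕ} (h : m < N) :
    lahTotal (m + 1) = ∑ j ∈ range N, lahColumn j m := by
  rw [← sum_range_add_sum_Ico _ h, sum_eq_zero (s := Ico _ _)
    fun j hj => lahColumn_eq_zero_of_lt (mem_Ico.mp hj).1, add_zero, lahTotal,
    ← Finset.Ico_add_one_right_eq_Icc, sum_Ico_eq_sum_range]
  simp [lahColumn, add_comm]

theorem lahTotal_absolutely_convex (n : ℕ) (hn : 1 ≤ n) (k : ℕ) :
    0 ≤ ∑ m ∈ Finset.range (2 * k + 1),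
        (-1 : ℝ) ^ m * ((2 * k).choose m : ℝ) * lahTotal (n + 2 * k - m) := by
  obtain ⟨n, rfl⟩ : ∃ n', n = n' + 1 := ⟨n - 1, by omega⟩
  have hcolumns : ∀ m ∈ range (2 * k + 1),
      lahTotal (n + 1 + 2 * k - m) = (∑ j ∈ range (n + 2 * k + 1), lahColumn j) (n + 2 * k - m) := by
    intro m hm
    rw [Finset.sum_apply, ← lahTotal_succ_eq_sum_lahColumn (by omega)]
    congr 1
    have := mem_range.mp hm
    omega
  rw [sum_congr rfl fun m hm => by rw [hcolumns m hm],
    sum_range_neg_one_pow_mul_choose_mul_eq_fwdDiff_iter, fwdDiff_iter_finsetSum, Finset.sum_apply]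
  exact sum_nonneg fun j _ => fwdDiff_iter_lahColumn_nonneg j _ _
end

section
/- For every real z > 0, e^{1/z} = 1 + ∫_0^∞ (∑_{j=0}^∞ t^j/(j!(j+1)!)) e^{-zt} dt. -/
open MeasureTheory Real

/-!
Expand the integrand term by term. Since `∫₀^∞ tʲ e^{-zt} dt = j! / z^{j+1}`, the `j`-th term
integrates to `z^{-(j+1)} / (j+1)!`, and these are the terms of the exponential series of `1/z`
without its constant term. All terms are nonnegative, so the series of integrals converging is
enough to integrate term by term.
-/

open Set
open scoped Nat

theorem integrableOn_pow_mul_exp_neg_mul_Ioi (n : ℕ) {r : ℝ} (hr : 0 < r) :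
    IntegrableOn (fun t : ℝ => t ^ n * exp (-(r * t))) (Ioi 0) := by
  have hn : (-1 : ℝ) < n := by linarith [n.cast_nonneg (α := ℝ)]
  refine (integrableOn_rpow_mul_exp_neg_mul_rpow hn one_pos hr).congr_fun (fun t _ => ?_)
    measurableSet_Ioi
  simp [neg_mul]

theorem integral_pow_mul_exp_neg_mul_Ioi (n : ℕ) {r : ℝ} (hr : 0 < r) :
    ∫ t in Ioi 0, t ^ n * exp (-(r * t)) = n ! / r ^ (n + 1) := by
  have h := integral_rpow_mul_exp_neg_mul_Ioi (a := n + 1) (by positivity) hr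
  rw [add_sub_cancel_right, Gamma_nat_eq_factorial, ← Nat.cast_succ, rpow_natCast] at h
  rw [div_eq_mul_one_div, mul_comm, ← one_div_pow, ← h]
  refine setIntegral_congr_fun measurableSet_Ioi fun t _ => ?_
  simp

theorem Real.hasSum_pow_succ_div_factorial_succ (x : ℝ) :
    HasSum (fun n : ℕ => x ^ (n + 1) / (n + 1)!) (exp x - 1) := by
  have h := (hasSum_nat_add_iff' 1).mpr (NormedSpace.expSeries_div_hasSum_exp (𝔸 := ℝ) x)
  simpa [← exp_eq_exp_ℝ] using h

theorem integral_tsum_of_nonneg_of_hasSum {ι α : Type*} [Countable ι] [MeasurableSpace α]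
    {μ : Measure α} {F : ι → α → ℝ} (hF_int : ∀ i, Integrable (F i) μ)
    (hF_nonneg : ∀ i, 0 ≤ᵐ[μ] F i) {S : ℝ} (hS : HasSum (fun i => ∫ a, F i a ∂μ) S) :
    ∫ a, ∑' i, F i a ∂μ = S := by
  have hnorm : ∀ i, ∫ a, ‖F i a‖ ∂μ = ∫ a, F i a ∂μ := fun i =>
    integral_congr_ae <| (hF_nonneg i).mono fun a ha => Real.norm_of_nonneg ha
  rw [← integral_tsum_of_summable_integral_norm hF_int (by simpa only [hnorm] using hS.summable),
    hS.tsum_eq]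

theorem exp_inv_integral_repr (z : ℝ) (hz : 0 < z) :
    Real.exp (1 / z)
      = 1 + ∫ t in Set.Ioi (0 : ℝ),
          (∑' j : ℕ, t ^ j / ((Nat.factorial j : ℝ) * (Nat.factorial (j + 1))))
            * Real.exp (-(z * t)) := by
  have hterm : ∀ j : ℕ, ∫ t in Ioi 0, t ^ j * exp (-(z * t)) / ((j ! : ℝ) * (j + 1)!)
      = (1 / z) ^ (j + 1) / (j + 1)! := fun j => by
    rw [integral_div, integral_pow_mul_exp_neg_mul_Ioi j hz, one_div_pow]
    field_simp
  simp_rw [← tsum_mul_right, div_mul_eq_mul_div]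
  rw [integral_tsum_of_nonneg_of_hasSum (S := exp (1 / z) - 1)
      (fun j => (integrableOn_pow_mul_exp_neg_mul_Ioi j hz).div_const _)
      (fun j => ae_restrict_of_forall_mem measurableSet_Ioi fun t (ht : 0 < t) => by positivity)
      (by simpa only [hterm] using hasSum_pow_succ_div_factorial_succ (1 / z))]
  ring
end
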